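/- arXiv:math/9808100 — 2 statements merged into one kernel-verified Lean document; each statement's English description precedes it below -/
import Mathlib

section
/- Let X be a positive bounded operator on a Hilbert space F, and T ∈ B(F) an operator satisfying T X T* ≤ X. Then there exists a unique contraction A on the closure K of the range of X^{1/2} such that A X^{1/2} = X^{1/2} T* (as operators from F to K). -/
open ContinuousLinearMap in
/-- If `X ≥ 0` and `T X T^* ≤ X`, then there is a unique contraction `A` on the closure
`K` of the range of `X^{1/2}` satisfying `A X^{1/2} = X^{1/2} T^*`.  Here `R` denotes the
positive square root of `X` (i.e. `R ≥ 0` and `R² = X`). -/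
theorem arveson_compression_contraction {F : Type*} [NormedAddCommGroup F]
    [InnerProductSpace ℂ F] [CompleteSpace F] (X R T : F →L[ℂ] F)
    (hX : X.IsPositive) (hR : R.IsPositive) (hRR : R * R = X)
    (hT : (X - T * X * ContinuousLinearMap.adjoint T).IsPositive) :
    ∃! A : (LinearMap.range (R : F →ₗ[ℂ] F)).topologicalClosure →L[ℂ]
        (LinearMap.range (R : F →ₗ[ℂ] F)).topologicalClosure,
      ‖A‖ ≤ 1 ∧ ∀ ξ : F,
        (A ⟨R ξ, Submodule.le_topologicalClosure _ (LinearMap.mem_range_self _ ξ)⟩ : F)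
          = R (ContinuousLinearMap.adjoint T ξ) := by
  set K := (LinearMap.range (R : F →ₗ[ℂ] F)).topologicalClosure with hK
  -- norm identity: ‖R η‖² = re ⟪X η, η⟫
  have hnorm : ∀ η : F, ‖R η‖ ^ 2 = RCLike.re (inner ℂ (X η) η : ℂ) := by
    intro η
    have h1 : (inner ℂ (X η) η : ℂ) = inner ℂ (R η) (R η) := by
      rw [← hRR]
      rw [mul_apply_eq_comp, ← ContinuousLinearMap.adjoint_inner_left,
        hR.isSelfAdjoint.adjoint_eq]
    rw [h1, inner_self_eq_norm_sq]
  -- key estimate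
  have key : ∀ ξ : F, ‖R (ContinuousLinearMap.adjoint T ξ)‖ ≤ ‖R ξ‖ := by
    intro ξ
    have h0 := hT.2 ξ
    rw [reApplyInnerSelf_apply] at h0
    have h1 : (inner ℂ ((X - T * X * ContinuousLinearMap.adjoint T) ξ) ξ : ℂ)
        = inner ℂ (X ξ) ξ - inner ℂ (X (ContinuousLinearMap.adjoint T ξ)) (ContinuousLinearMap.adjoint T ξ) := by
      simp only [ContinuousLinearMap.sub_apply, mul_apply_eq_comp, inner_sub_left]
      rw [ContinuousLinearMap.adjoint_inner_right]
    rw [h1, map_sub] at h0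
    have h2 : ‖R (ContinuousLinearMap.adjoint T ξ)‖ ^ 2 ≤ ‖R ξ‖ ^ 2 := by
      rw [hnorm, hnorm]; linarith
    nlinarith [norm_nonneg (R (ContinuousLinearMap.adjoint T ξ)), norm_nonneg (R ξ)]
  have hmem : ∀ ξ : F, R (ContinuousLinearMap.adjoint T ξ) ∈ K := fun ξ =>
    Submodule.le_topologicalClosure _ (LinearMap.mem_range_self _ _)
  set g : F →ₗ[ℂ] K :=
    LinearMap.codRestrict K ((R : F →ₗ[ℂ] F) ∘ₗ (ContinuousLinearMap.adjoint T : F →ₗ[ℂ] F))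
      hmem with hg
  have hgnorm : ∀ ξ : F, ‖g ξ‖ = ‖R (ContinuousLinearMap.adjoint T ξ)‖ := fun ξ => rfl
  have hker : LinearMap.ker (R : F →ₗ[ℂ] F) ≤ LinearMap.ker g := by
    intro ξ hξ
    rw [LinearMap.mem_ker] at hξ ⊢
    have h1 : ‖g ξ‖ ≤ ‖R ξ‖ := key ξ
    have h2 : (R ξ : F) = 0 := hξ
    rw [← norm_le_zero_iff]
    calc ‖g ξ‖ ≤ ‖R ξ‖ := h1
    _ = 0 := by rw [h2, norm_zero]
  set A₀ : LinearMap.range (R : F →ₗ[ℂ] F) →ₗ[ℂ] K :=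
    (Submodule.liftQ _ g hker) ∘ₗ
      ((LinearMap.quotKerEquivRange (R : F →ₗ[ℂ] F)).symm : _ →ₗ[ℂ] _) with hA₀def
  have hA₀ : ∀ ξ : F, A₀ ⟨(R : F →ₗ[ℂ] F) ξ, LinearMap.mem_range_self _ ξ⟩ = g ξ := by
    intro ξ
    show Submodule.liftQ _ g hker
      ((LinearMap.quotKerEquivRange (R : F →ₗ[ℂ] F)).symm
        ⟨(R : F →ₗ[ℂ] F) ξ, LinearMap.mem_range_self _ ξ⟩) = g ξ
    rw [LinearMap.quotKerEquivRange_symm_apply_image]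
    rfl
  have hA₀bound : ∀ y : LinearMap.range (R : F →ₗ[ℂ] F), ‖A₀ y‖ ≤ 1 * ‖y‖ := by
    rintro ⟨y, ξ, rfl⟩
    rw [one_mul, hA₀ ξ]
    exact le_trans (le_of_eq (hgnorm ξ)) (key ξ)
  set A₁ : LinearMap.range (R : F →ₗ[ℂ] F) →L[ℂ] K := A₀.mkContinuous 1 hA₀bound with hA₁def
  have hA₁norm : ‖A₁‖ ≤ 1 := A₀.mkContinuous_norm_le zero_le_one hA₀bound
  set e : LinearMap.range (R : F →ₗ[ℂ] F) →L[ℂ] K :=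
    (Submodule.inclusion (Submodule.le_topologicalClosure _)).mkContinuous 1
      (fun x => by rw [one_mul]; exact le_of_eq rfl) with hedef
  have he : ∀ x, ‖x‖ ≤ (1 : NNReal) * ‖e x‖ := fun x => by
    rw [NNReal.coe_one, one_mul]; exact le_of_eq rfl
  have hd : DenseRange e := by
    intro x
    rw [closure_subtype]
    refine closure_mono (s := (LinearMap.range (R : F →ₗ[ℂ] F) : Set F)) ?_ ?_
    · exact fun y hy => ⟨e ⟨y, hy⟩, ⟨⟨y, hy⟩, rfl⟩, rfl⟩
    · exact x.2
  set A : K →L[ℂ] K :=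
    A₁.extend e with hAdef
  have hAnorm : ‖A‖ ≤ 1 := by
    calc ‖A‖ ≤ (1 : NNReal) * ‖A₁‖ := A₁.opNorm_extend_le hd he
    _ ≤ 1 := by rw [NNReal.coe_one, one_mul]; exact hA₁norm
  have hAeq : ∀ ξ : F,
      (A ⟨R ξ, Submodule.le_topologicalClosure _ (LinearMap.mem_range_self _ ξ)⟩ : F)
        = R (ContinuousLinearMap.adjoint T ξ) := by
    intro ξ
    have h1 : (⟨R ξ, Submodule.le_topologicalClosure _ (LinearMap.mem_range_self _ ξ)⟩ : K)
        = e ⟨R ξ, LinearMap.mem_range_self _ ξ⟩ := rfl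
    rw [h1, ContinuousLinearMap.extend_eq _ hd
      (ContinuousLinearMap.isUniformEmbedding_of_bound _ he).isUniformInducing]
    show ((A₀ ⟨(R : F →ₗ[ℂ] F) ξ, LinearMap.mem_range_self _ ξ⟩ : K) : F) = _
    rw [hA₀ ξ]
    rfl
  refine ⟨A, ⟨hAnorm, hAeq⟩, ?_⟩
  rintro A' ⟨-, hA'⟩
  have : (A' : K → K) = A := by
    refine hd.equalizer A'.continuous A.continuous ?_
    funext y
    obtain ⟨y, ξ, rfl⟩ := y
    show A' ⟨R ξ, _⟩ = A ⟨R ξ, _⟩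
    exact Subtype.ext (by rw [hA' ξ, hAeq ξ])
  exact ContinuousLinearMap.coeFn_injective this
end

section
/- Let M be a finitely generated module over k[x_1,…,x_d] with submodule K and quotient L = M/K. Then the additivity c(M) = c(K) + c(L) holds, where c(·) denotes the invariant d!·lim_n dim(filtration)_n / n^d taken with respect to any proper filtration (the induced filtrations K ∩ M_n on K and (M_n + K)/K on L are proper). -/
open Filter

/-- A proper filtration of a module `V` over `k[x_1,…,x_d]`. -/
def IsProperFiltration (K : Type*) [Field K] (d : ℕ) (V : Type*) [AddCommGroup V]
    [Module (MvPolynomial (Fin d) K) V] [Module K V]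
    [IsScalarTower K (MvPolynomial (Fin d) K) V] (M : ℕ → Submodule K V) : Prop :=
  Monotone M ∧ (∀ n, FiniteDimensional K (M n)) ∧ (∀ v : V, ∃ n, v ∈ M n) ∧
  (∀ (i : Fin d) (n : ℕ), ∀ v ∈ M n,
    (MvPolynomial.X i : MvPolynomial (Fin d) K) • v ∈ M (n + 1)) ∧
  (∃ n₀ : ℕ, ∀ n ≥ n₀, ∀ v ∈ M (n + 1), ∃ w ∈ M n, ∃ u : Fin d → V,
    (∀ i, u i ∈ M n) ∧
    v = w + ∑ i, (MvPolynomial.X i : MvPolynomial (Fin d) K) • u i)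


section ArvesonAux
open MvPolynomial


variable {K : Type*} [Field K] {d : ℕ}
  {M : Type*} [AddCommGroup M] [Module (MvPolynomial (Fin d) K) M] [Module K M]
  [IsScalarTower K (MvPolynomial (Fin d) K) M]

local notation "A" => MvPolynomial (Fin d) K

example : SMulCommClass K (MvPolynomial (Fin d) K) M := inferInstance

theorem aux_monomial {FM : ℕ → Submodule K M}
    (hX : ∀ (i : Fin d) (n : ℕ), ∀ v ∈ FM n, (X i : A) • v ∈ FM (n + 1)) :
    ∀ (s : ℕ) (α : Fin d →₀ ℕ), (α.sum fun _ e => e) = s → ∀ (c : K) (n : ℕ), ∀ v ∈ FM n,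
      (monomial α c : A) • v ∈ FM (n + s) := by
  intro s
  induction s with
  | zero =>
    intro α hα c n v hv
    have : α = 0 := by
      ext i
      by_contra h
      have hi : i ∈ α.support := Finsupp.mem_support_iff.mpr h
      have := Finset.sum_eq_zero_iff.mp hα i hi
      exact h this
    subst this
    have : (monomial 0 c : A) = algebraMap K A c := by
      rw [MvPolynomial.algebraMap_eq, MvPolynomial.C_apply]
    rw [this, algebraMap_smul]
    simpa using (FM n).smul_mem c hv
  | succ s ih =>
    intro α hα c n v hv
    have hne : α ≠ 0 := by
      intro h; subst h; simp [Finsupp.sum] at hα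
    obtain ⟨i, hi⟩ : ∃ i, α i ≠ 0 := by
      by_contra h
      push_neg at h
      exact hne (Finsupp.ext h)
    set α' := α - Finsupp.single i 1 with hα'
    have hadd : α' + Finsupp.single i 1 = α := by
      ext j
      simp only [hα', Finsupp.add_apply, Finsupp.tsub_apply, Finsupp.single_apply]
      by_cases h : i = j
      · subst h; simp; omega
      · simp [h]
    have hsum : (α'.sum fun _ e => e) = s := by
      have h1 : (α.sum fun _ e => e) = (α'.sum fun _ e => e) + 1 := by
        rw [← hadd, Finsupp.sum_add_index (by simp) (by intros; rfl)]
        simp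
      omega
    have hmul : (monomial α c : A) = (X i : A) * monomial α' c := by
      rw [mul_comm, ← hadd]
      rw [X, monomial_mul, mul_one]
    rw [hmul, mul_smul]
    exact hX i (n + s) _ (ih α' hsum c n v hv)

theorem aux_poly {FM : ℕ → Submodule K M}
    (hX : ∀ (i : Fin d) (n : ℕ), ∀ v ∈ FM n, (X i : A) • v ∈ FM (n + 1))
    (hmono : Monotone FM) {q : A} {s : ℕ} (hq : q.totalDegree ≤ s)
    {n : ℕ} {v : M} (hv : v ∈ FM n) : q • v ∈ FM (n + s) := by
  rw [← q.support_sum_monomial_coeff, Finset.sum_smul]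
  refine Submodule.sum_mem _ fun α hα => ?_
  have hdeg : (α.sum fun _ e => e) ≤ s := le_trans (MvPolynomial.le_totalDegree hα) hq
  exact hmono (by omega) (aux_monomial hX _ α rfl _ n v hv)


/-- The submodule of elements of the form `w + ∑ xᵢ • uᵢ` with `w, uᵢ ∈ N ⊓ FM n`. -/
def Tsub (N : Submodule (MvPolynomial (Fin d) K) M) (FM : ℕ → Submodule K M) (n : ℕ) :
    Submodule K M where
  carrier := {v | ∃ w, w ∈ N ∧ w ∈ FM n ∧ ∃ u : Fin d → M,
    (∀ i, u i ∈ N ∧ u i ∈ FM n) ∧ v = w + ∑ i, (X i : A) • u i}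
  add_mem' := by
    rintro v₁ v₂ ⟨w₁, hw₁N, hw₁F, u₁, hu₁, rfl⟩ ⟨w₂, hw₂N, hw₂F, u₂, hu₂, rfl⟩
    refine ⟨w₁ + w₂, add_mem hw₁N hw₂N, add_mem hw₁F hw₂F, fun i => u₁ i + u₂ i,
      fun i => ⟨add_mem (hu₁ i).1 (hu₂ i).1, add_mem (hu₁ i).2 (hu₂ i).2⟩, ?_⟩
    simp only [smul_add, Finset.sum_add_distrib]
    abel
  zero_mem' := ⟨0, zero_mem _, zero_mem _, fun _ => 0, fun i => ⟨zero_mem _, zero_mem _⟩,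
    by simp⟩
  smul_mem' := by
    rintro k v ⟨w, hwN, hwF, u, hu, rfl⟩
    refine ⟨k • w, N.smul_of_tower_mem k hwN, Submodule.smul_mem _ k hwF, fun i => k • u i,
      fun i => ⟨N.smul_of_tower_mem k (hu i).1, Submodule.smul_mem _ k (hu i).2⟩, ?_⟩
    rw [smul_add, Finset.smul_sum]
    congr 1
    exact Finset.sum_congr rfl fun i _ => (smul_comm _ _ _)

theorem mem_Tsub_of_mem {N : Submodule (MvPolynomial (Fin d) K) M} {FM : ℕ → Submodule K M}
    {n : ℕ} {v : M} (h1 : v ∈ N) (h2 : v ∈ FM n) : v ∈ Tsub N FM n :=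
  ⟨v, h1, h2, fun _ => 0, fun _ => ⟨zero_mem _, zero_mem _⟩, by simp⟩

theorem Xsmul_mem_Tsub {N : Submodule (MvPolynomial (Fin d) K) M} {FM : ℕ → Submodule K M}
    {n : ℕ} {g : M} (i : Fin d) (h1 : g ∈ N) (h2 : g ∈ FM n) :
    (X i : A) • g ∈ Tsub N FM n := by
  refine ⟨0, zero_mem _, zero_mem _, fun j => if j = i then g else 0,
    fun j => by by_cases h : j = i <;> simp [h, h1, h2], ?_⟩
  rw [zero_add]
  rw [Finset.sum_congr rfl (fun j _ => by
    rw [show (X j : A) • (if j = i then g else 0) = if j = i then (X i : A) • g else 0 by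
      by_cases h : j = i <;> simp [h]])]
  rw [Finset.sum_ite_eq' Finset.univ i (fun _ => (X i : A) • g)]
  simp

theorem aux_key {FM : ℕ → Submodule K M}
    (hX : ∀ (i : Fin d) (n : ℕ), ∀ v ∈ FM n, (X i : A) • v ∈ FM (n + 1))
    (hmono : Monotone FM) {N : Submodule (MvPolynomial (Fin d) K) M}
    {q : A} {a c n : ℕ} (hq : q.totalDegree ≤ a) (ha : 1 ≤ a) (hc : a + c = n + 1)
    {g : M} (hgN : g ∈ N) (hgF : g ∈ FM c) : q • g ∈ Tsub N FM n := by
  rw [← q.support_sum_monomial_coeff, Finset.sum_smul]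
  refine Submodule.sum_mem _ fun α hα => ?_
  have hdeg : (α.sum fun _ e => e) ≤ a := le_trans (MvPolynomial.le_totalDegree hα) hq
  by_cases hzero : α = 0
  · subst hzero
    have : (monomial 0 (q.coeff 0) : A) = algebraMap K A (q.coeff 0) := by
      rw [MvPolynomial.algebraMap_eq, MvPolynomial.C_apply]
    rw [this, algebraMap_smul]
    exact Submodule.smul_mem _ _ (mem_Tsub_of_mem hgN (hmono (by omega) hgF))
  · obtain ⟨i, hi⟩ : ∃ i, α i ≠ 0 := by
      by_contra h
      push_neg at h
      exact hzero (Finsupp.ext h)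
    set α' := α - Finsupp.single i 1 with hα'
    have hadd : α' + Finsupp.single i 1 = α := by
      ext j
      simp only [hα', Finsupp.add_apply, Finsupp.tsub_apply, Finsupp.single_apply]
      by_cases h : i = j
      · subst h; simp; omega
      · simp [h]
    have hsum : (α'.sum fun _ e => e) + 1 = (α.sum fun _ e => e) := by
      rw [← hadd, Finsupp.sum_add_index (by simp) (by intros; rfl)]
      simp
    have hmul : (monomial α (q.coeff α) : A) = (X i : A) * monomial α' (q.coeff α) := by
      rw [mul_comm, ← hadd]
      rw [X, monomial_mul, mul_one]
    rw [hmul, mul_smul]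
    refine Xsmul_mem_Tsub i (N.smul_mem _ hgN) ?_
    have := aux_monomial hX _ α' rfl (q.coeff α) c g hgF
    exact hmono (by omega) this



local notation "B" => MvPolynomial (Fin (d + 1)) K
local notation "P" => PolynomialModule (MvPolynomial (Fin d) K) M

set_option linter.unusedSectionVars false

/-- The map from `k[y₀,…,y_d]` to `A[t]` sending `y₀ ↦ t`, `yᵢ ↦ xᵢ t`. -/
noncomputable def phiB (K : Type*) [Field K] (d : ℕ) :
    MvPolynomial (Fin (d + 1)) K →ₐ[K] Polynomial (MvPolynomial (Fin d) K) :=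
  MvPolynomial.aeval
    (Fin.cases Polynomial.X (fun i => Polynomial.C (X i) * Polynomial.X))

theorem phiB_coeff_totalDegree (b : B) (a : ℕ) :
    ((phiB K d b).coeff a).totalDegree ≤ a := by
  induction b using MvPolynomial.induction_on generalizing a with
  | C k =>
    rw [show ((C k : B)) = algebraMap K B k from rfl, AlgHom.commutes]
    rcases Nat.eq_zero_or_pos a with h | h
    · subst h
      simp [Polynomial.algebraMap_apply, MvPolynomial.algebraMap_eq]
    · rw [Polynomial.algebraMap_apply, Polynomial.coeff_C, if_neg (by omega)]
      simp
  | add p q hp hq =>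
    rw [map_add, Polynomial.coeff_add]
    exact le_trans (MvPolynomial.totalDegree_add _ _) (max_le (hp a) (hq a))
  | mul_X p j hp =>
    rw [map_mul]
    induction j using Fin.cases with
    | zero =>
      rw [show phiB K d (X 0) = Polynomial.X by rw [phiB, aeval_X]; rfl]
      rcases Nat.eq_zero_or_pos a with h | h
      · subst h
        simp
      · obtain ⟨a', rfl⟩ := Nat.exists_eq_add_of_lt h
        rw [zero_add, Polynomial.coeff_mul_X]
        exact le_trans (hp a') (by omega)
    | succ i =>
      rw [show phiB K d (X i.succ) = Polynomial.C (X i) * Polynomial.X by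
        rw [phiB, aeval_X]; rfl]
      rw [← mul_assoc]
      rcases Nat.eq_zero_or_pos a with h | h
      · subst h
        simp
      · obtain ⟨a', rfl⟩ := Nat.exists_eq_add_of_lt h
        rw [zero_add, Polynomial.coeff_mul_X, Polynomial.coeff_mul_C]
        refine le_trans (MvPolynomial.totalDegree_mul _ _) ?_
        have := hp a'
        have hX : (X i : A).totalDegree ≤ 1 := le_of_eq (MvPolynomial.totalDegree_X i)
        omega

theorem polyC_smul (k : K) (p : P) : Polynomial.C (C k : A) • p = k • p := by
  refine PolynomialModule.coeff_injective (Finsupp.ext fun n => ?_)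
  rw [PolynomialModule.smul_apply]
  rw [Finset.sum_eq_single ((0 : ℕ), n)]
  · rw [Polynomial.coeff_C_zero]
    rw [show ((C k : A)) = algebraMap K A k from rfl, algebraMap_smul]
    rfl
  · rintro ⟨a, c⟩ hmem hne
    rw [Finset.HasAntidiagonal.mem_antidiagonal] at hmem
    have ha : a ≠ 0 := by
      rintro rfl
      exact hne (by simp only [Prod.mk.injEq]; exact ⟨trivial, by omega⟩)
    rw [Polynomial.coeff_C, if_neg ha, zero_smul]
  · intro h
    exact absurd (Finset.HasAntidiagonal.mem_antidiagonal.mpr (by simp)) h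

theorem X0_smul_single (m : ℕ) (x : M) :
    (Polynomial.X : Polynomial A) • PolynomialModule.single A m x
      = PolynomialModule.single A (m + 1) x := by
  rw [← Polynomial.monomial_one_one_eq_X, PolynomialModule.monomial_smul_single]
  rw [one_smul, add_comm]

theorem Xi_smul_single (i : Fin d) (m : ℕ) (x : M) :
    (Polynomial.C (X i) * Polynomial.X : Polynomial A) • PolynomialModule.single A m x
      = PolynomialModule.single A (m + 1) ((X i : A) • x) := by
  rw [Polynomial.C_mul_X_eq_monomial, PolynomialModule.monomial_smul_single, add_comm]

theorem phiB_X0 : phiB K d (X 0) = Polynomial.X := by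
  rw [phiB, aeval_X]; rfl

theorem phiB_Xsucc (i : Fin d) : phiB K d (X i.succ) = Polynomial.C (X i) * Polynomial.X := by
  rw [phiB, aeval_X]; rfl


theorem phiB_C (k : K) : phiB K d (C k) = Polynomial.C (C k : MvPolynomial (Fin d) K) := by
  rw [show ((C k : B)) = algebraMap K B k from rfl, AlgHom.commutes,
    Polynomial.algebraMap_apply, MvPolynomial.algebraMap_eq]


theorem artin_rees {FM : ℕ → Submodule K M}
    (hmono : Monotone FM) (hfd : ∀ n, FiniteDimensional K (FM n))
    (hX : ∀ (i : Fin d) (n : ℕ), ∀ v ∈ FM n, (X i : A) • v ∈ FM (n + 1))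
    (n₀ : ℕ)
    (hstep : ∀ n ≥ n₀, ∀ v ∈ FM (n + 1), ∃ w ∈ FM n, ∃ u : Fin d → M,
      (∀ i, u i ∈ FM n) ∧ v = w + ∑ i, (X i : A) • u i)
    (N : Submodule (MvPolynomial (Fin d) K) M) :
    ∃ m₀ : ℕ, ∀ n ≥ m₀, ∀ v ∈ N, v ∈ FM (n + 1) → v ∈ Tsub N FM n := by
  classical
  letI : Module B P := Module.compHom _ (phiB K d).toRingHom
  have hsmul : ∀ (b : B) (p : P), b • p = phiB K d b • p := fun _ _ => rfl
  have hKsmul : ∀ (k : K) (p : P), (C k : B) • p = k • p := by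
    intro k p
    rw [hsmul, phiB_C, polyC_smul]
  -- The Rees module of the filtration.
  set Rees : Submodule B P :=
    { carrier := {p | ∀ n, p.coeff n ∈ FM n}
      add_mem' := fun hp hq n => by
        rw [PolynomialModule.coeff_add, Finsupp.add_apply]; exact add_mem (hp n) (hq n)
      zero_mem' := fun n => by rw [PolynomialModule.coeff_zero, Finsupp.zero_apply]; exact zero_mem _
      smul_mem' := by
        intro b p hp n
        rw [hsmul, PolynomialModule.smul_apply]
        refine Submodule.sum_mem _ ?_
        rintro ⟨a, c⟩ hmem
        rw [Finset.HasAntidiagonal.mem_antidiagonal] at hmem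
        exact hmono (show c + a ≤ n by omega)
          (aux_poly hX hmono (phiB_coeff_totalDegree b a) (hp c)) } with hReesDef
  have hReesMem : ∀ p : P, p ∈ Rees ↔ ∀ n, p.coeff n ∈ FM n := fun p => Iff.rfl
  -- The Rees module of the induced filtration on `N`.
  set NRees : Submodule B P :=
    { carrier := {p | (∀ n, p.coeff n ∈ FM n) ∧ (∀ n, p.coeff n ∈ N)}
      add_mem' := by
        rintro p q ⟨hp1, hp2⟩ ⟨hq1, hq2⟩
        refine ⟨Rees.add_mem hp1 hq1, fun n => ?_⟩
        rw [PolynomialModule.coeff_add, Finsupp.add_apply]; exact add_mem (hp2 n) (hq2 n)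
      zero_mem' := by
        refine ⟨Rees.zero_mem, fun n => ?_⟩
        rw [PolynomialModule.coeff_zero, Finsupp.zero_apply]; exact zero_mem _
      smul_mem' := by
        rintro b p ⟨hp1, hp2⟩
        refine ⟨Rees.smul_mem b hp1, fun n => ?_⟩
        rw [hsmul, PolynomialModule.smul_apply]
        refine Submodule.sum_mem _ ?_
        rintro ⟨a, c⟩ hmem
        exact N.smul_mem _ (hp2 c) } with hNReesDef
  -- A finite spanning set of the Rees module.
  have hfin : ∀ m : ℕ, ∃ s : Finset M, Submodule.span K (s : Set M) = FM m := by
    intro m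
    haveI := hfd m
    exact ((FM m).fg_iff_finiteDimensional.mpr (hfd m))
  choose s hs using hfin
  set S : Finset P :=
    (Finset.range (n₀ + 1)).biUnion
      (fun m => (s m).image (PolynomialModule.single A m)) with hSdef
  have hsingle_mem : ∀ (m : ℕ) (x : M), x ∈ FM m →
      PolynomialModule.single A m x ∈ Submodule.span B (S : Set P) := by
    have hbase : ∀ m, m ≤ n₀ → ∀ x ∈ FM m,
        PolynomialModule.single A m x ∈ Submodule.span B (S : Set P) := by
      intro m hm x hx
      rw [← hs m] at hx
      refine Submodule.span_induction
        (p := fun x _ => PolynomialModule.single A m x ∈ Submodule.span B (S : Set P))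
        ?_ ?_ ?_ ?_ hx
      · intro y hy
        show PolynomialModule.single A m y ∈ Submodule.span B (S : Set P)
        refine Submodule.subset_span ?_
        simp only [hSdef, Finset.coe_biUnion, Finset.coe_image, Set.mem_iUnion]
        exact ⟨m, by simpa using Nat.lt_succ_of_le hm, Set.mem_image_of_mem _ hy⟩
      · show PolynomialModule.single A m (0 : M) ∈ Submodule.span B (S : Set P)
        rw [PolynomialModule.single_zero]; exact zero_mem _
      · intro y z _ _ hy hz
        show PolynomialModule.single A m (y + z) ∈ Submodule.span B (S : Set P)
        rw [PolynomialModule.single_add]; exact add_mem hy hz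
      · intro k y _ hy
        show PolynomialModule.single A m (k • y) ∈ Submodule.span B (S : Set P)
        have : PolynomialModule.single A m (k • y)
            = (C k : B) • PolynomialModule.single A m y := by
          rw [hKsmul]
          exact congrArg (PolynomialModule.ofCoeff A) (Finsupp.smul_single k m y).symm
        rw [this]
        exact Submodule.smul_mem _ _ hy
    intro m
    induction m with
    | zero => exact hbase 0 (Nat.zero_le _)
    | succ m ih =>
      intro x hx
      by_cases hm : m + 1 ≤ n₀
      · exact hbase (m + 1) hm x hx
      · obtain ⟨w, hw, u, hu, rfl⟩ := hstep m (by omega) x hx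
        rw [PolynomialModule.single_add, show PolynomialModule.single A (m + 1) (∑ i, (X i : A) • u i) = ∑ i, PolynomialModule.single A (m + 1) ((X i : A) • u i) from map_sum (PolynomialModule.lsingle A (m + 1)) _ _]
        refine add_mem ?_ (Submodule.sum_mem _ fun i _ => ?_)
        · have : PolynomialModule.single A (m + 1) w
              = (X 0 : B) • PolynomialModule.single A m w := by
            rw [hsmul, phiB_X0, X0_smul_single]
          rw [this]
          exact Submodule.smul_mem _ _ (ih w hw)
        · have : PolynomialModule.single A (m + 1) ((X i : A) • u i)
              = (X i.succ : B) • PolynomialModule.single A m (u i) := by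
            rw [hsmul, phiB_Xsucc, Xi_smul_single]
          rw [this]
          exact Submodule.smul_mem _ _ (ih (u i) (hu i))
  -- The Rees module is finitely generated, hence Noetherian.
  have hReesFG : Rees.FG := by
    refine ⟨S, le_antisymm (Submodule.span_le.mpr ?_) ?_⟩
    · intro p hp
      simp only [hSdef, Finset.coe_biUnion, Finset.coe_image, Set.mem_iUnion] at hp
      obtain ⟨m, -, y, hy, rfl⟩ := hp
      intro n
      rw [PolynomialModule.coeff_single, Finsupp.single_apply]
      split_ifs with h
      · subst h
        rw [← hs m]
        exact Submodule.subset_span hy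
      · exact zero_mem _
    · intro p hp
      have hrepr : p.coeff.sum (fun m x => PolynomialModule.single A m x) = p :=
        PolynomialModule.coeff_injective (by simp [Finsupp.sum_single])
      rw [show p = p.coeff.sum (fun m x => PolynomialModule.single A m x) from hrepr.symm]
      refine Submodule.sum_mem _ fun m hm => ?_
      exact hsingle_mem m (p.coeff m) (hp m)
  haveI : IsNoetherianRing B := inferInstance
  haveI hNoeth : IsNoetherian B Rees := isNoetherian_of_fg_of_noetherian Rees hReesFG
  have hNReesFG : NRees.FG := by
    have hle : NRees ≤ Rees := fun p hp => hp.1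
    have h1 : Submodule.map Rees.subtype (Submodule.comap Rees.subtype NRees) = NRees := by
      rw [Submodule.map_comap_subtype, inf_eq_right.mpr hle]
    rw [← h1]
    exact Submodule.FG.map _ (IsNoetherian.noetherian _)
  obtain ⟨G, hG⟩ := hNReesFG
  refine ⟨G.sup (fun p => p.coeff.support.sup id), ?_⟩
  set m₀ := G.sup (fun p => p.coeff.support.sup id) with hm₀
  have hbound : ∀ p ∈ G, ∀ c : ℕ, m₀ < c → p.coeff c = 0 := by
    intro p hp c hc
    by_contra h
    have h1 : c ∈ p.coeff.support := Finsupp.mem_support_iff.mpr h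
    have h2 : c ≤ p.coeff.support.sup id := Finset.le_sup (f := id) h1
    have h3 : p.coeff.support.sup id ≤ m₀ := Finset.le_sup (f := fun p : P => p.coeff.support.sup id) hp
    omega
  intro n hn v hvN hvF
  have hq : PolynomialModule.single A (n + 1) v ∈ NRees := by
    constructor
    · intro k
      rw [PolynomialModule.coeff_single, Finsupp.single_apply]
      split_ifs with h
      · subst h; exact hvF
      · exact zero_mem _
    · intro k
      rw [PolynomialModule.coeff_single, Finsupp.single_apply]
      split_ifs with h
      · subst h; exact hvN
      · exact zero_mem _
  rw [← hG, Submodule.mem_span_finset] at hq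
  obtain ⟨f, -, hf⟩ := hq
  have hv : v = ∑ p ∈ G, (f p • p).coeff (n + 1) := by
    have h1 : (∑ p ∈ G, f p • p).coeff (n + 1) = ∑ p ∈ G, (f p • p).coeff (n + 1) := by
      rw [PolynomialModule.coeff_sum, Finsupp.finset_sum_apply]
    have h2 : (PolynomialModule.single A (n + 1) v).coeff (n + 1) = v := by
      rw [PolynomialModule.coeff_single, Finsupp.single_eq_same]
    calc v = (PolynomialModule.single A (n + 1) v).coeff (n + 1) := h2.symm
      _ = (∑ p ∈ G, f p • p).coeff (n + 1) := by rw [hf]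
      _ = ∑ p ∈ G, (f p • p).coeff (n + 1) := h1
  rw [hv]
  refine Submodule.sum_mem _ fun p hp => ?_
  have hpN : p ∈ NRees := hG ▸ Submodule.subset_span hp
  rw [hsmul, PolynomialModule.smul_apply]
  refine Submodule.sum_mem _ ?_
  rintro ⟨a, c⟩ hmem
  rw [Finset.HasAntidiagonal.mem_antidiagonal] at hmem
  rcases Nat.eq_zero_or_pos a with ha | ha
  · subst ha
    have : p.coeff c = 0 := hbound p hp c (by omega)
    rw [show p.coeff c = (0 : M) from this, smul_zero]
    exact zero_mem _
  · exact aux_key hX hmono (phiB_coeff_totalDegree (f p) a) ha (by omega)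
      (hpN.2 c) (hpN.1 c)


end ArvesonAux

set_option maxHeartbeats 1000000 in
set_option synthInstance.maxHeartbeats 400000 in
/-- Proposition 3.10 of Arveson (additivity of `c` on short exact sequences): if `M` is a
finitely generated module over `k[x_1,…,x_d]` with submodule `N` and quotient `M/N`, then
for any proper filtration of `M`, the induced filtrations `N ∩ M_n` of `N` and
`(M_n + N)/N` of `M/N` are proper, and `c(M) = c(N) + c(M/N)` where `c` denotes the
corresponding limit `d!·lim dim(·)_n/n^d`. -/
theorem arveson_c_additive (K : Type*) [Field K] (d : ℕ)
    (M : Type*) [AddCommGroup M] [Module (MvPolynomial (Fin d) K) M] [Module K M]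
    [IsScalarTower K (MvPolynomial (Fin d) K) M]
    [Module.Finite (MvPolynomial (Fin d) K) M]
    (N : Submodule (MvPolynomial (Fin d) K) M)
    (FM : ℕ → Submodule K M) (hFM : IsProperFiltration K d M FM) :
    IsProperFiltration K d N
        (fun n => (FM n).comap (N.subtype.restrictScalars K)) ∧
    IsProperFiltration K d (M ⧸ N)
        (fun n => (FM n).map (N.mkQ.restrictScalars K)) ∧
    ∀ cM cN cL : ℝ,
      Tendsto (fun n : ℕ =>
          ((d.factorial : ℝ) * (Module.finrank K (FM n) : ℝ)) / (n : ℝ) ^ d)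
        atTop (nhds cM) →
      Tendsto (fun n : ℕ =>
          ((d.factorial : ℝ) *
            (Module.finrank K ((FM n).comap (N.subtype.restrictScalars K)) : ℝ)) / (n : ℝ) ^ d)
        atTop (nhds cN) →
      Tendsto (fun n : ℕ =>
          ((d.factorial : ℝ) *
            (Module.finrank K ((FM n).map (N.mkQ.restrictScalars K)) : ℝ)) / (n : ℝ) ^ d)
        atTop (nhds cL) →
      cM = cN + cL := by
  obtain ⟨hmono, hfd, hexh, hX, n₀, hstep⟩ := hFM
  have hNfilt : IsProperFiltration K d N
      (fun n => (FM n).comap (N.subtype.restrictScalars K)) := by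
    refine ⟨fun a b h => Submodule.comap_mono (hmono h), ?_, ?_, ?_, ?_⟩
    · intro n
      haveI := hfd n
      have hinj : Function.Injective (N.subtype.restrictScalars K) :=
        Subtype.val_injective
      let e := Submodule.equivMapOfInjective (N.subtype.restrictScalars K) hinj
        ((FM n).comap (N.subtype.restrictScalars K))
      haveI : FiniteDimensional K
          (Submodule.map (N.subtype.restrictScalars K)
            ((FM n).comap (N.subtype.restrictScalars K))) :=
        Submodule.finiteDimensional_of_le (Submodule.map_comap_le _ _)
      exact Module.Finite.equiv e.symm
    · intro v
      obtain ⟨n, hn⟩ := hexh (v : M)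
      exact ⟨n, hn⟩
    · intro i n v hv
      show ((MvPolynomial.X i : MvPolynomial (Fin d) K) • v : N).1 ∈ FM (n + 1)
      rw [Submodule.coe_smul]
      exact hX i n _ hv
    · obtain ⟨m₀, hAR⟩ := artin_rees hmono hfd hX n₀ hstep N
      refine ⟨m₀, fun n hn v hv => ?_⟩
      obtain ⟨w, hwN, hwF, u, hu, heq⟩ := hAR n hn (v : M) v.2 hv
      refine ⟨⟨w, hwN⟩, hwF, fun i => ⟨u i, (hu i).1⟩, fun i => (hu i).2, ?_⟩
      apply Subtype.ext
      rw [heq, Submodule.coe_add, AddSubmonoidClass.coe_finset_sum]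
      congr 1
  have hLfilt : IsProperFiltration K d (M ⧸ N)
      (fun n => (FM n).map (N.mkQ.restrictScalars K)) := by
    refine ⟨fun a b h => Submodule.map_mono (hmono h), ?_, ?_, ?_, ?_⟩
    · intro n
      haveI := hfd n
      exact (Submodule.fg_iff_finiteDimensional _).mp
        (Submodule.FG.map _ ((Submodule.fg_iff_finiteDimensional _).mpr (hfd n)))
    · intro x
      obtain ⟨v, rfl⟩ := N.mkQ_surjective x
      obtain ⟨n, hn⟩ := hexh v
      exact ⟨n, ⟨v, hn, rfl⟩⟩
    · rintro i n x ⟨v, hv, rfl⟩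
      refine ⟨(MvPolynomial.X i : MvPolynomial (Fin d) K) • v, hX i n v hv, ?_⟩
      show N.mkQ _ = (MvPolynomial.X i : MvPolynomial (Fin d) K) • N.mkQ v
      exact map_smul N.mkQ _ _
    · refine ⟨n₀, fun n hn x hx => ?_⟩
      obtain ⟨v, hv, rfl⟩ := hx
      obtain ⟨w, hw, u, hu, rfl⟩ := hstep n hn v hv
      refine ⟨N.mkQ w, ⟨w, hw, rfl⟩, fun i => N.mkQ (u i),
        fun i => ⟨u i, hu i, rfl⟩, ?_⟩
      show N.mkQ _ = _
      rw [map_add, map_sum]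
      congr 1
  refine ⟨hNfilt, hLfilt, ?_⟩
  intro cM cN cL hM hN hL
  have key : ∀ n : ℕ, (Module.finrank K (FM n) : ℝ)
      = (Module.finrank K ((FM n).comap (N.subtype.restrictScalars K)) : ℝ)
        + (Module.finrank K ((FM n).map (N.mkQ.restrictScalars K)) : ℝ) := by
    intro n
    haveI := hfd n
    set f : ↥(FM n) →ₗ[K] M ⧸ N := (N.mkQ.restrictScalars K).comp (FM n).subtype with hf
    have hrange : LinearMap.range f = (FM n).map (N.mkQ.restrictScalars K) := by
      rw [hf, LinearMap.range_comp, Submodule.range_subtype]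
    have hkermem : ∀ x : ↥(FM n), x ∈ LinearMap.ker f ↔ (x : M) ∈ N := by
      intro x
      rw [LinearMap.mem_ker]
      show N.mkQ (x : M) = 0 ↔ _
      rw [Submodule.mkQ_apply, Submodule.Quotient.mk_eq_zero]
    let e : ↥(LinearMap.ker f) ≃ₗ[K]
        ↥((FM n).comap (N.subtype.restrictScalars K)) :=
      { toFun := fun x => ⟨⟨(x : ↥(FM n)), (hkermem _).mp x.2⟩, (x : ↥(FM n)).2⟩
        map_add' := fun x y => rfl
        map_smul' := fun k x => rfl
        invFun := fun y => ⟨⟨((y : ↥N) : M), y.2⟩, (hkermem _).mpr (y : ↥N).2⟩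
        left_inv := fun x => rfl
        right_inv := fun y => rfl }
    have h1 := LinearMap.finrank_range_add_finrank_ker f
    have h2 : Module.finrank K (LinearMap.ker f)
        = Module.finrank K ((FM n).comap (N.subtype.restrictScalars K)) :=
      e.finrank_eq
    rw [hrange, h2] at h1
    rw [← h1]
    push_cast
    ring
  have heq : (fun n : ℕ =>
      ((d.factorial : ℝ) * (Module.finrank K (FM n) : ℝ)) / (n : ℝ) ^ d)
      = (fun n : ℕ =>
        ((d.factorial : ℝ) *
          (Module.finrank K ((FM n).comap (N.subtype.restrictScalars K)) : ℝ)) / (n : ℝ) ^ d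
        + ((d.factorial : ℝ) *
          (Module.finrank K ((FM n).map (N.mkQ.restrictScalars K)) : ℝ)) / (n : ℝ) ^ d) := by
    funext n
    rw [key n]
    ring
  rw [heq] at hM
  exact tendsto_nhds_unique hM (hN.add hL)
end
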